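/- Let R ≅ R₁ × R₂ × R₃, where R₁, R₂, R₃ are commutative rings with identity each having exactly one nonzero proper ideal. Then the metric dimension of the prime ideal sum graph PIS(R) equals 5. -/

import Mathlib

open scoped Classical

/-- The vertex set of the prime ideal sum graph: nonzero proper ideals of `R`. -/
abbrev PISVertex (R : Type*) [CommRing R] := {I : Ideal R // I ≠ ⊥ ∧ I ≠ ⊤}

/-- The prime ideal sum graph of a commutative ring `R`: vertices are nonzero proper
ideals, and two distinct vertices `I`, `J` are adjacent iff `I + J` is a prime ideal. -/
def PIS (R : Type*) [CommRing R] : SimpleGraph (PISVertex R) where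
  Adj I J := I ≠ J ∧ (I.1 + J.1).IsPrime
  symm := ⟨fun I J h => ⟨h.1.symm, by rw [add_comm]; exact h.2⟩⟩
  loopless := ⟨fun I h => h.1 rfl⟩

/-- A set `S` of vertices is a resolving set if any two distinct vertices not both in `S`
are distinguished by the distance to some vertex of `S`. -/
def IsResolvingSet {V : Type*} (G : SimpleGraph V) (S : Set V) : Prop :=
  ∀ u v : V, u ≠ v → ¬(u ∈ S ∧ v ∈ S) → ∃ w ∈ S, G.dist u w ≠ G.dist v w

/-- The metric dimension of a graph: the least cardinality of a resolving set. -/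
noncomputable def metricDim {V : Type*} (G : SimpleGraph V) : ℕ∞ :=
  ⨅ S : {S : Set V // IsResolvingSet G S}, (S : Set V).encard

/-!
Each `Rᵢ` has ideals `⊥ < mᵢ < ⊤` only, and its only prime is `mᵢ`: were `⊥` prime, a nonzero
`x ∈ mᵢ` would give two distinct nonzero proper ideals `(x²) < (x)`. Hence `Ideal R` is the cube
`(Fin 3)³`, the sum of ideals is the coordinatewise maximum, and the primes are the points
`(1,2,2)`, `(2,1,2)`, `(2,2,1)`, so `PIS R` is one fixed graph on the 25 inner points of the cube.
That graph has diameter 2, so a vertex outside a resolving set `S` is determined by its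
adjacencies to `S`; this forces `25 ≤ |S| + 2^|S|`, i.e. `|S| ≥ 5`, and an explicit set of five
vertices resolves it.
-/

namespace SimpleGraph

variable {V W : Type*} {G : SimpleGraph V} {H : SimpleGraph W}

lemma Hom.edist_le (f : G →g H) (u v : V) : H.edist (f u) (f v) ≤ G.edist u v := by
  by_cases h : G.edist u v = ⊤
  · simp [h]
  · obtain ⟨p, hp⟩ := exists_walk_of_edist_ne_top h
    rw [← hp, ← Walk.length_map f p]
    exact SimpleGraph.edist_le _

lemma Iso.edist_map (φ : G ≃g H) (u v : V) : H.edist (φ u) (φ v) = G.edist u v :=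
  le_antisymm (φ.toHom.edist_le u v) (by simpa using φ.symm.toHom.edist_le (φ u) (φ v))

lemma Iso.dist_map (φ : G ≃g H) (u v : V) : H.dist (φ u) (φ v) = G.dist u v :=
  congrArg ENat.toNat (φ.edist_map u v)

lemma ediam_le_two_of_forall_exists_adj_adj
    (h : ∀ u v, u ≠ v → ¬G.Adj u v → ∃ w, G.Adj u w ∧ G.Adj w v) : G.ediam ≤ 2 := by
  refine ediam_le_of_edist_le fun u v => ?_
  by_cases huv : u = v
  · simp [huv]
  by_cases hadj : G.Adj u v
  · simp [edist_eq_one_iff_adj.2 hadj]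
  obtain ⟨w, huw, hwv⟩ := h u v huv hadj
  exact edist_le (.cons huw (.cons hwv .nil))

lemma dist_eq_of_ediam_le_two [DecidableEq V] [DecidableRel G.Adj] (h : G.ediam ≤ 2) (u v : V) :
    G.dist u v = if u = v then 0 else if G.Adj u v then 1 else 2 := by
  split_ifs with huv hadj
  · simp [huv]
  · exact dist_eq_one_iff_adj.2 hadj
  · have h2 : G.edist u v ≤ 2 := edist_le_ediam.trans h
    have h0 : G.edist u v ≠ 0 := edist_eq_zero_iff.not.2 huv
    have h1 : G.edist u v ≠ 1 := edist_eq_one_iff_adj.not.2 hadj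
    lift G.edist u v to ℕ using (h2.trans_lt (by decide)).ne with d hd
    rw [dist, ← hd, ENat.toNat_natCast]
    norm_cast at h0 h1 h2
    omega

end SimpleGraph

open SimpleGraph

section MetricDimension

variable {V W : Type*} {G : SimpleGraph V} {H : SimpleGraph W}

lemma IsResolvingSet.image {S : Set V} (hS : IsResolvingSet G S) (φ : G ≃g H) :
    IsResolvingSet H (φ '' S) := by
  intro u v huv hmem
  have hdist : ∀ x w, H.dist x (φ w) = G.dist (φ.symm x) w := fun x w => by
    rw [← φ.dist_map, φ.apply_symm_apply]
  obtain ⟨w, hw, hne⟩ := hS (φ.symm u) (φ.symm v) (φ.symm.injective.ne huv)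
    fun ⟨hu, hv⟩ => hmem ⟨⟨_, hu, φ.apply_symm_apply u⟩, ⟨_, hv, φ.apply_symm_apply v⟩⟩
  exact ⟨φ w, Set.mem_image_of_mem φ hw, by rwa [hdist, hdist]⟩

lemma metricDim_le_encard {S : Set V} (hS : IsResolvingSet G S) : metricDim G ≤ S.encard :=
  iInf_le_of_le ⟨S, hS⟩ le_rfl

lemma metricDim_le_of_iso (φ : G ≃g H) : metricDim H ≤ metricDim G :=
  le_iInf fun S => (metricDim_le_encard (S.2.image φ)).trans_eq φ.injective.injOn.encard_image

lemma SimpleGraph.Iso.metricDim_eq (φ : G ≃g H) : metricDim G = metricDim H :=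
  le_antisymm (metricDim_le_of_iso φ.symm) (metricDim_le_of_iso φ)

/- Outside `S` the distances to `S` are `1` or `2`, so a vertex outside `S` is determined by its
adjacencies to `S`. -/
lemma IsResolvingSet.card_le_add_two_pow [Fintype V] (h : G.ediam ≤ 2) {S : Finset V}
    (hS : IsResolvingSet G S) : Fintype.card V ≤ S.card + 2 ^ S.card := by
  classical
  have hinj : Set.InjOn (fun u (w : S) => G.Adj u w) ↑Sᶜ := by
    intro u hu v hv hadj
    by_contra huv
    obtain ⟨w, hw, hne⟩ := hS u v huv (by simp_all)
    have hu : u ≠ w := by rintro rfl; simp_all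
    have hv : v ≠ w := by rintro rfl; simp_all
    have := congrFun hadj ⟨w, hw⟩
    simp only at this
    rw [dist_eq_of_ediam_le_two h, dist_eq_of_ediam_le_two h, this] at hne
    simp [hu, hv] at hne
  have := Finset.card_le_card_of_injOn _ (t := Finset.univ) (fun _ _ => Finset.mem_univ _) hinj
  rw [Finset.card_compl, Finset.card_univ, Fintype.card_fun, Fintype.card_prop,
    Fintype.card_coe] at this
  omega

lemma le_metricDim_of_ediam_le_two [Fintype V] (h : G.ediam ≤ 2) {k : ℕ}
    (hk : k + 2 ^ k < Fintype.card V) : (k + 1 : ℕ∞) ≤ metricDim G := by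
  refine le_iInf fun ⟨S, hS⟩ => ?_
  obtain hfin | hinf := S.finite_or_infinite
  · lift S to Finset V using hfin
    rw [Set.encard_coe_eq_coe_finsetCard]
    by_contra! hlt
    have hle : S.card ≤ k := by exact_mod_cast Order.le_of_lt_add_one hlt
    have := hS.card_le_add_two_pow h
    have := Nat.pow_le_pow_right two_pos hle
    omega
  · simp [hinf.encard_eq]

end MetricDimension

def joinGraph {L : Type*} [Lattice L] [BoundedOrder L] (P : Set L) :
    SimpleGraph {x : L // x ≠ ⊥ ∧ x ≠ ⊤} where
  Adj x y := x ≠ y ∧ x.1 ⊔ y.1 ∈ P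
  symm := ⟨fun x y h => ⟨h.1.symm, sup_comm x.1 y.1 ▸ h.2⟩⟩
  loopless := ⟨fun _ h => h.1 rfl⟩

lemma PIS_eq_joinGraph (R : Type*) [CommRing R] : PIS R = joinGraph {I : Ideal R | I.IsPrime} :=
  rfl

def OrderIso.joinGraphIso {L L' : Type*} [Lattice L] [BoundedOrder L] [Lattice L']
    [BoundedOrder L'] (Φ : L ≃o L') {P : Set L} {P' : Set L'} (hP : ∀ x, x ∈ P ↔ Φ x ∈ P') :
    joinGraph P ≃g joinGraph P' where
  toEquiv := Φ.toEquiv.subtypeEquiv fun x => by simp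
  map_rel_iff' {x y} := by
    simp [joinGraph, hP (x.1 ⊔ y.1), Subtype.ext_iff]

def OrderIso.prodCongr {α β γ δ : Type*} [LE α] [LE β] [LE γ] [LE δ] (f : α ≃o β) (g : γ ≃o δ) :
    α × γ ≃o β × δ where
  toEquiv := f.toEquiv.prodCongr g.toEquiv
  map_rel_iff' := by simp [Prod.le_def]

namespace Ideal

variable {R S : Type*} [CommRing R] [CommRing S]

lemma isPrime_prod_iff {I : Ideal R} {J : Ideal S} :
    (I.prod J).IsPrime ↔ I.IsPrime ∧ J = ⊤ ∨ I = ⊤ ∧ J.IsPrime := by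
  refine ⟨fun h => ?_, ?_⟩
  · rcases ideal_prod_prime_aux h with rfl | rfl
    · exact .inr ⟨rfl, isPrime_of_isPrime_prod_top' h⟩
    · exact .inl ⟨isPrime_of_isPrime_prod_top h, rfl⟩
  · rintro (⟨hI, rfl⟩ | ⟨rfl, hJ⟩)
    · exact isPrime_ideal_prod_top
    · exact isPrime_ideal_prod_top'

lemma isPrime_map_ringEquiv_iff (e : R ≃+* S) {I : Ideal R} : (I.map e).IsPrime ↔ I.IsPrime :=
  ⟨fun h => comap_map_of_bijective _ e.bijective (I := I) ▸ h.comap (e : R →+* S),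
    fun _ => map_isPrime_of_equiv e⟩

lemma exists_orderIso_of_ringEquiv {L : Type*} [LE L] {P : Set L} (e : R ≃+* S)
    (h : ∃ Φ : Ideal S ≃o L, ∀ I, I.IsPrime ↔ Φ I ∈ P) :
    ∃ Φ : Ideal R ≃o L, ∀ I, I.IsPrime ↔ Φ I ∈ P := by
  obtain ⟨Φ, hΦ⟩ := h
  refine ⟨e.symm.idealComapOrderIso.trans Φ, fun I => ?_⟩
  simp [← hΦ, isPrime_map_ringEquiv_iff]

lemma exists_orderIso_prod {L₁ L₂ : Type*} [PartialOrder L₁] [OrderTop L₁] [PartialOrder L₂]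
    [OrderTop L₂] {P₁ : Set L₁} {P₂ : Set L₂}
    (h₁ : ∃ Φ : Ideal R ≃o L₁, ∀ I, I.IsPrime ↔ Φ I ∈ P₁)
    (h₂ : ∃ Φ : Ideal S ≃o L₂, ∀ I, I.IsPrime ↔ Φ I ∈ P₂) :
    ∃ Φ : Ideal (R × S) ≃o L₁ × L₂,
      ∀ I, I.IsPrime ↔ Φ I ∈ {x | x.1 ∈ P₁ ∧ x.2 = ⊤ ∨ x.1 = ⊤ ∧ x.2 ∈ P₂} := by
  obtain ⟨Φ₁, hΦ₁⟩ := h₁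
  obtain ⟨Φ₂, hΦ₂⟩ := h₂
  refine ⟨idealProdEquiv.trans (Φ₁.prodCongr Φ₂), fun I => ?_⟩
  obtain ⟨⟨J, K⟩, rfl⟩ := idealProdEquiv.symm.surjective I
  rw [OrderIso.trans_apply, OrderIso.apply_symm_apply]
  simp [isPrime_prod_iff, hΦ₁, hΦ₂, OrderIso.prodCongr]

variable {A : Type*} [CommRing A] {m : Ideal A}

lemma not_isPrime_bot_of_unique (hm : m ≠ ⊥ ∧ m ≠ ⊤)
    (huniq : ∀ I : Ideal A, I ≠ ⊥ ∧ I ≠ ⊤ → I = m) : ¬(⊥ : Ideal A).IsPrime := by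
  intro hbot
  have := IsDomain.of_bot_isPrime A
  obtain ⟨x, hxm, hx0⟩ := Submodule.exists_mem_ne_zero_of_ne_bot hm.1
  have hxu : ¬IsUnit x := fun hu => hm.2 (eq_top_of_isUnit_mem _ hxm hu)
  have hspan : ∀ y : A, y ≠ 0 → ¬IsUnit y → span {y} = m := fun y hy hyu =>
    huniq _ ⟨span_singleton_eq_bot.not.2 hy, span_singleton_eq_top.not.2 hyu⟩
  have hlt : span {x * x} < span {x} :=
    span_singleton_lt_span_singleton.2 ⟨hx0, x, hxu, rfl⟩
  exact hlt.ne ((hspan _ (mul_ne_zero hx0 hx0) (hxu ∘ isUnit_of_mul_isUnit_left)).trans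
    (hspan x hx0 hxu).symm)

lemma isMaximal_of_unique (hm : m ≠ ⊥ ∧ m ≠ ⊤)
    (huniq : ∀ I : Ideal A, I ≠ ⊥ ∧ I ≠ ⊤ → I = m) : m.IsMaximal :=
  isMaximal_def.2 ⟨hm.2, fun J hJ => by_contra fun hJ1 =>
    hJ.ne (huniq J ⟨(bot_le.trans_lt hJ).ne', hJ1⟩).symm⟩

lemma exists_orderIso_fin_three (h : ∃! I : Ideal A, I ≠ ⊥ ∧ I ≠ ⊤) :
    ∃ Φ : Ideal A ≃o Fin 3, ∀ I, I.IsPrime ↔ Φ I ∈ ({1} : Set (Fin 3)) := by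
  obtain ⟨m, hm, huniq⟩ := h
  have hmono : StrictMono ![⊥, m, ⊤] := Fin.strictMono_iff_lt_succ.2 fun i => by
    fin_cases i
    · exact bot_lt_iff_ne_bot.2 hm.1
    · exact lt_top_iff_ne_top.2 hm.2
  have hsurj : Function.Surjective ![⊥, m, ⊤] := fun I => by
    by_cases h0 : I = ⊥
    · exact ⟨0, h0.symm⟩
    by_cases h1 : I = ⊤
    · exact ⟨2, h1.symm⟩
    exact ⟨1, (huniq I ⟨h0, h1⟩).symm⟩
  refine ⟨(hmono.orderIsoOfSurjective _ hsurj).symm, fun I => ?_⟩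
  obtain ⟨i, rfl⟩ := hsurj I
  rw [StrictMono.orderIsoOfSurjective_symm_apply_self, Set.mem_singleton_iff]
  fin_cases i
  · exact iff_of_false (not_isPrime_bot_of_unique hm huniq) (by decide)
  · exact iff_of_true (isMaximal_of_unique hm huniq).isPrime rfl
  · exact iff_of_false (fun h => h.ne_top rfl) (by decide)

end Ideal

section Cube

/- A point of the cube records each coordinate `⊥ < mᵢ < ⊤` of an ideal of `R₁ × R₂ × R₃` as
`0 < 1 < 2`; these are the primes. -/
def cubePrimes : Set (Fin 3 × Fin 3 × Fin 3) := {(1, 2, 2), (2, 1, 2), (2, 2, 1)}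

instance : DecidablePred (· ∈ cubePrimes) := fun x =>
  inferInstanceAs (Decidable (x = (1, 2, 2) ∨ x = (2, 1, 2) ∨ x = (2, 2, 1)))

instance : DecidableRel (joinGraph cubePrimes).Adj := fun x y =>
  inferInstanceAs (Decidable (x ≠ y ∧ x.1 ⊔ y.1 ∈ cubePrimes))

lemma ediam_joinGraph_cubePrimes_le_two : (joinGraph cubePrimes).ediam ≤ 2 := by
  have h : ∀ u v, u = v ∨ (joinGraph cubePrimes).Adj u v ∨
      ∃ w, (joinGraph cubePrimes).Adj u w ∧ (joinGraph cubePrimes).Adj w v := by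
    decide
  exact ediam_le_two_of_forall_exists_adj_adj fun u v huv hadj =>
    ((h u v).resolve_left huv).resolve_left hadj

def cubeResolvingSet : Finset {x : Fin 3 × Fin 3 × Fin 3 // x ≠ ⊥ ∧ x ≠ ⊤} :=
  {⟨(0, 2, 2), by decide⟩, ⟨(1, 1, 2), by decide⟩, ⟨(1, 2, 1), by decide⟩,
    ⟨(2, 0, 2), by decide⟩, ⟨(2, 2, 0), by decide⟩}

lemma isResolvingSet_cubeResolvingSet :
    IsResolvingSet (joinGraph cubePrimes) ↑cubeResolvingSet := by
  have h : ∀ u v, u = v ∨ ∃ w ∈ cubeResolvingSet,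
      (if u = w then 0 else if (joinGraph cubePrimes).Adj u w then 1 else 2) ≠
        (if v = w then 0 else if (joinGraph cubePrimes).Adj v w then 1 else 2) := by
    decide
  intro u v huv _
  simp only [dist_eq_of_ediam_le_two ediam_joinGraph_cubePrimes_le_two, Finset.mem_coe]
  exact (h u v).resolve_left huv

lemma metricDim_joinGraph_cubePrimes : metricDim (joinGraph cubePrimes) = 5 := by
  refine le_antisymm ?_ ?_
  · exact (metricDim_le_encard isResolvingSet_cubeResolvingSet).trans_eq
      (by rw [Set.encard_coe_eq_coe_finsetCard]; rfl)
  · exact le_metricDim_of_ediam_le_two (k := 4) ediam_joinGraph_cubePrimes_le_two (by decide)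

end Cube

/-- If `R` is isomorphic to a product of three rings each having exactly one nonzero
proper ideal, then the metric dimension of `PIS R` equals 5. -/
theorem metricDim_PIS_three_factors {R R₁ R₂ R₃ : Type*} [CommRing R]
    [CommRing R₁] [CommRing R₂] [CommRing R₃]
    (h₁ : ∃! I : Ideal R₁, I ≠ ⊥ ∧ I ≠ ⊤) (h₂ : ∃! I : Ideal R₂, I ≠ ⊥ ∧ I ≠ ⊤)
    (h₃ : ∃! I : Ideal R₃, I ≠ ⊥ ∧ I ≠ ⊤)
    (e : R ≃+* (R₁ × R₂ × R₃)) :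
    metricDim (PIS R) = 5 := by
  obtain ⟨Φ, hΦ⟩ := Ideal.exists_orderIso_of_ringEquiv e <|
    Ideal.exists_orderIso_prod (Ideal.exists_orderIso_fin_three h₁) <|
      Ideal.exists_orderIso_prod (Ideal.exists_orderIso_fin_three h₂)
        (Ideal.exists_orderIso_fin_three h₃)
  have hprimes : ∀ I : Ideal R, I ∈ {I : Ideal R | I.IsPrime} ↔ Φ I ∈ cubePrimes := fun I =>
    (hΦ I).trans <| by generalize Φ I = x; revert x; decide
  rw [PIS_eq_joinGraph, (Φ.joinGraphIso hprimes).metricDim_eq, metricDim_joinGraph_cubePrimes]
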